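/- Fix δ ∈ (θ/2, 1/2 − θ) and set ε = (1/2 − θ − δ)/2. For ζ ∈ ℤ²∖{0} let B_ζ = {ξ ∈ ℤ² : |⟨ξ,ζ⟩| ≤ |ξ|^{2δ}}, and define S' = {n ∈ S : for every ζ ∈ ℤ²∖{0} with |ζ| ≤ n^ε one has A(n, n^δ) ∩ B_ζ = ∅}. Then there is a constant C > 0 such that #{m ∈ S∖S' : m ≤ X} ≤ C · X^{1/2+δ+θ+ε} for all X ≥ 2; in particular, since 1/2 + δ + θ + ε < 1, the set S' has density 1 in S. -/

import Mathlib

open Real MeasureTheory Filter Finset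

noncomputable section

/-- `m` is a sum of two integer squares. -/
def IsSum2Sq (m : ℕ) : Prop := ∃ a b : ℤ, (m : ℤ) = a ^ 2 + b ^ 2

/-- The increasing enumeration `n₀ < n₁ < ⋯` of `S = {4π²m : m a sum of two squares}`. -/
noncomputable def nseq (k : ℕ) : ℝ := 4 * Real.pi ^ 2 * (Nat.nth IsSum2Sq k)

/-- The set `S` of Laplace eigenvalues of the standard torus. -/
def Sset : Set ℝ := Set.range nseq

/-- The number of elements of `S'` (a subset of `S`) that are `≤ X`. -/
noncomputable def countLE (S' : Set ℝ) (X : ℝ) : ℕ :=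
  Nat.card {k : ℕ // nseq k ∈ S' ∧ nseq k ≤ X}

/-- `S' ⊆ S` has density one in `S`. -/
def HasDensityOne (S' : Set ℝ) : Prop :=
  Tendsto (fun X : ℝ => (countLE S' X : ℝ) / (countLE Sset X)) atTop (nhds 1)

/-- The Euclidean norm of a lattice vector. -/
noncomputable def znorm (ξ : Fin 2 → ℤ) : ℝ := Real.sqrt (∑ i, (ξ i : ℝ) ^ 2)

/-- Huxley's exponent in the circle law. -/
noncomputable def θH : ℝ := 133 / 416

/-- The set of "bad" lattice points attached to `ζ ≠ 0`:
`B_ζ = {ξ ∈ ℤ² : |⟨ξ,ζ⟩| ≤ |ξ|^{2δ}}`. -/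
def badSet (δ : ℝ) (ζ : Fin 2 → ℤ) : Set (Fin 2 → ℤ) :=
  {ξ | |∑ i, (ξ i : ℝ) * (ζ i : ℝ)| ≤ (znorm ξ) ^ (2 * δ)}

/-- The annulus `A(n, L) = {ξ ∈ ℤ² : |4π²|ξ|² − n| ≤ L}`. -/
def annulus (n L : ℝ) : Set (Fin 2 → ℤ) :=
  {ξ | |4 * Real.pi ^ 2 * (∑ i, (ξ i : ℝ) ^ 2) - n| ≤ L}

/-- The good subsequence `S' ⊆ S`: those `n ∈ S` for which the annulus `A(n, n^δ)` avoids all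
bad sets `B_ζ`, `0 ≠ |ζ| ≤ n^ε`. -/
def goodSet (δ ε : ℝ) : Set ℝ :=
  {n ∈ Sset | ∀ ζ : Fin 2 → ℤ, ζ ≠ 0 → znorm ζ ≤ n ^ ε →
    annulus n (n ^ δ) ∩ badSet δ ζ = ∅}

/-!
A bad `n = 4π²m ≤ X` comes with `ζ ≠ 0`, `|ζ| ≤ X^ε`, and a lattice point `ξ` with
`|ξ|² ≤ X`, `||ξ|² - m| ≤ X^δ` and `|⟨ξ, ζ⟩| ≤ |ξ|^{2δ} ≤ X^δ`. Given `ζ ≠ 0`, the vector `ξ` is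
determined by `⟨ξ, ζ⟩` and one of its coordinates, and then `m` by `m - |ξ|²`; counting these
data bounds the number of bad `n ≤ X` by `O(X^{1/2 + 2δ + 2ε})`, and
`1/2 + 2δ + 2ε = 1 - θ + δ < 1`.

On the other hand `S` has `≫ X / log² X` elements up to `X`. By Cauchy–Schwarz,
`(K + 1)⁴ ≤ #{m ≤ 2K² : m = a² + b²} · #{a² + b² = c² + d² : a, b, c, d ≤ K}`, and a solution
with `c < a` of `(a - c)(a + c) = (d - b)(d + b)` is determined by `a - c`, `a + c` and divisors
`v ∣ a - c`, `w ∣ a + c` with `vw = d - b`, so there are `≪ K² log² K` solutions.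
-/

lemma setOf_isSum2Sq_infinite : {m : ℕ | IsSum2Sq m}.Infinite :=
  Set.infinite_of_injective_forall_mem (Nat.pow_left_injective two_ne_zero)
    fun j => ⟨j, 0, by push_cast; ring⟩

lemma one_le_four_pi_sq : 1 ≤ 4 * π ^ 2 := by nlinarith [pi_gt_three]

lemma le_nseq (k : ℕ) : (k : ℝ) ≤ nseq k :=
  calc (k : ℝ) ≤ Nat.nth IsSum2Sq k := by
        exact_mod_cast (Nat.nth_strictMono setOf_isSum2Sq_infinite).le_apply
    _ ≤ nseq k := le_mul_of_one_le_left (Nat.cast_nonneg _) one_le_four_pi_sq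

lemma countLE_eq_card (S' : Set ℝ) [DecidablePred (· ∈ S')] (X : ℝ) :
    countLE S' X = #{k ∈ range (⌊X⌋₊ + 1) | nseq k ∈ S' ∧ nseq k ≤ X} := by
  rw [countLE, ← Nat.card_eq_finsetCard]
  refine Nat.card_congr (Equiv.subtypeEquivRight fun k => ?_)
  simp only [mem_filter, mem_range, Nat.lt_succ_iff, iff_and_self]
  exact fun h => Nat.le_floor ((le_nseq k).trans h.2)

lemma countLE_add_countLE_sdiff {G : Set ℝ} (hG : G ⊆ Sset) (X : ℝ) :
    countLE G X + countLE (Sset \ G) X = countLE Sset X := by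
  classical
  simp only [countLE_eq_card]
  rw [← card_filter_add_card_filter_not (s := {k ∈ range (⌊X⌋₊ + 1) | nseq k ∈ Sset ∧ nseq k ≤ X})
    (fun k => nseq k ∈ G), filter_filter, filter_filter]
  have hiff (k : ℕ) : (nseq k ∈ G ∧ nseq k ≤ X) ↔ ((nseq k ∈ Sset ∧ nseq k ≤ X) ∧ nseq k ∈ G) :=
    ⟨fun h => ⟨⟨hG h.1, h.2⟩, h.1⟩, fun h => ⟨h.2, h.1.2⟩⟩
  have hdiff (k : ℕ) :
      (nseq k ∈ Sset \ G ∧ nseq k ≤ X) ↔ ((nseq k ∈ Sset ∧ nseq k ≤ X) ∧ nseq k ∉ G) :=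
    ⟨fun h => ⟨⟨h.1.1, h.2⟩, h.1.2⟩, fun h => ⟨⟨h.1.1, h.2⟩, h.1.2⟩⟩
  simp only [hiff, hdiff]

def symmIcc (y : ℝ) : Finset ℤ := Icc (-⌈y⌉) ⌈y⌉

lemma mem_symmIcc_of_abs_le {x : ℤ} {y : ℝ} (h : |(x : ℝ)| ≤ y) : x ∈ symmIcc y := by
  rw [abs_le] at h
  refine mem_Icc.2 ⟨neg_le.1 (Int.le_ceil_iff.2 ?_), Int.le_ceil_iff.2 (by linarith)⟩
  push_cast
  linarith

lemma card_symmIcc_le {y : ℝ} (hy : 1 ≤ y) : (#(symmIcc y) : ℝ) ≤ 5 * y := by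
  have hceil : (0 : ℤ) ≤ ⌈y⌉ := Int.ceil_nonneg (by linarith)
  rw [symmIcc, Int.card_Icc, show ⌈y⌉ + 1 - -⌈y⌉ = 2 * ⌈y⌉ + 1 by ring]
  have : ((2 * ⌈y⌉ + 1).toNat : ℝ) = 2 * ⌈y⌉ + 1 := by
    exact_mod_cast Int.toNat_of_nonneg (by omega)
  rw [this]
  linarith [Int.ceil_lt_add_one y]

def freeCoord (ζ ξ : Fin 2 → ℤ) : ℤ := if ζ 0 = 0 then ξ 0 else ξ 1

lemma eq_of_inner_eq_of_freeCoord_eq {ζ ξ ξ' : Fin 2 → ℤ} (hζ : ζ ≠ 0)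
    (hinner : ∑ i, ξ i * ζ i = ∑ i, ξ' i * ζ i) (hfree : freeCoord ζ ξ = freeCoord ζ ξ') :
    ξ = ξ' := by
  simp only [Fin.sum_univ_two] at hinner
  unfold freeCoord at hfree
  split_ifs at hfree with h0
  · have h1 : ζ 1 ≠ 0 := fun h1 => hζ (funext fun i => by fin_cases i <;> assumption)
    rw [h0, hfree] at hinner
    have := mul_right_cancel₀ h1 (by linarith : ξ 1 * ζ 1 = ξ' 1 * ζ 1)
    ext i; fin_cases i <;> assumption
  · rw [hfree] at hinner
    have := mul_right_cancel₀ h0 (by linarith : ξ 0 * ζ 0 = ξ' 0 * ζ 0)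
    ext i; fin_cases i <;> assumption

def witnessData (ζ ξ : Fin 2 → ℤ) (m : ℕ) : (Fin 2 → ℤ) × ℤ × ℤ × ℤ :=
  (ζ, ∑ i, ξ i * ζ i, freeCoord ζ ξ, m - ∑ i, ξ i ^ 2)

lemma eq_of_witnessData_eq {ζ ζ' ξ ξ' : Fin 2 → ℤ} {m m' : ℕ} (hζ : ζ ≠ 0)
    (h : witnessData ζ ξ m = witnessData ζ' ξ' m') : m = m' := by
  simp only [witnessData, Prod.mk.injEq] at h
  obtain ⟨rfl, hinner, hfree, hm⟩ := h
  obtain rfl := eq_of_inner_eq_of_freeCoord_eq hζ hinner hfree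
  omega

def witnessBox (δ ε X : ℝ) : Finset ((Fin 2 → ℤ) × ℤ × ℤ × ℤ) :=
  Fintype.piFinset (fun _ => symmIcc (X ^ ε)) ×ˢ symmIcc (X ^ δ) ×ˢ symmIcc (√X) ×ˢ symmIcc (X ^ δ)

lemma card_witnessBox_le {δ ε X : ℝ} (hδ : 0 ≤ δ) (hε : 0 ≤ ε) (hX : 1 ≤ X) :
    (#(witnessBox δ ε X) : ℝ) ≤ 3125 * X ^ (1 / 2 + 2 * δ + 2 * ε) := by
  have hXε := card_symmIcc_le (one_le_rpow hX hε)
  have hXδ := card_symmIcc_le (one_le_rpow hX hδ)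
  have hsqrt := card_symmIcc_le (one_le_sqrt.2 hX)
  have hX0 : 0 < X := by linarith
  simp only [witnessBox, card_product, Fintype.card_piFinset, prod_const, card_univ,
    Fintype.card_fin]
  push_cast
  have hexp : X ^ (1 / 2 + 2 * δ + 2 * ε) = √X * (X ^ δ) ^ 2 * (X ^ ε) ^ 2 := by
    rw [rpow_add hX0, rpow_add hX0, sqrt_eq_rpow, ← rpow_natCast, ← rpow_natCast,
      ← rpow_mul hX0.le, ← rpow_mul hX0.le]
    push_cast
    ring_nf
  calc (#(symmIcc (X ^ ε)) : ℝ) ^ 2 * (#(symmIcc (X ^ δ)) * (#(symmIcc √X) * #(symmIcc (X ^ δ))))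
      ≤ (5 * X ^ ε) ^ 2 * (5 * X ^ δ * (5 * √X * (5 * X ^ δ))) := by
        gcongr
    _ = 3125 * X ^ (1 / 2 + 2 * δ + 2 * ε) := by
        rw [hexp]
        ring

lemma abs_coord_le_znorm (ξ : Fin 2 → ℤ) (i : Fin 2) : |(ξ i : ℝ)| ≤ znorm ξ := by
  rw [znorm, ← sqrt_sq_eq_abs]
  exact sqrt_le_sqrt (single_le_sum (fun j _ => sq_nonneg ((ξ j : ℝ))) (mem_univ i))

lemma sum_sq_bounds_of_mem_annulus {ξ : Fin 2 → ℤ} {m : ℕ} {L X : ℝ}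
    (hm : 4 * π ^ 2 * m ≤ X) (hL : L ≤ X) (hξ : ξ ∈ annulus (4 * π ^ 2 * m) L) :
    |∑ i, (ξ i : ℝ) ^ 2 - m| ≤ L ∧ ∑ i, (ξ i : ℝ) ^ 2 ≤ X := by
  have hpi := one_le_four_pi_sq
  rw [annulus, Set.mem_ofPred_eq, ← mul_sub, abs_mul, abs_of_pos (by positivity)] at hξ
  have hdiff : |∑ i, (ξ i : ℝ) ^ 2 - m| ≤ L :=
    le_trans (le_mul_of_one_le_left (abs_nonneg _) hpi) hξ
  refine ⟨hdiff, ?_⟩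
  have hpi2 : 2 ≤ 4 * π ^ 2 := by nlinarith [pi_gt_three]
  have hsum : 0 ≤ ∑ i, (ξ i : ℝ) ^ 2 := by positivity
  nlinarith [le_abs_self (∑ i, (ξ i : ℝ) ^ 2 - m)]

lemma witnessData_mem_witnessBox {δ ε X : ℝ} (hδ0 : 0 ≤ δ) (hδ1 : δ ≤ 1) (hε : 0 ≤ ε)
    (hX : 1 ≤ X) {m : ℕ} (hm : 4 * π ^ 2 * m ≤ X) {ζ ξ : Fin 2 → ℤ}
    (hζ : znorm ζ ≤ (4 * π ^ 2 * m) ^ ε)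
    (hann : ξ ∈ annulus (4 * π ^ 2 * m) ((4 * π ^ 2 * m) ^ δ)) (hbad : ξ ∈ badSet δ ζ) :
    witnessData ζ ξ m ∈ witnessBox δ ε X := by
  have hn : 0 ≤ 4 * π ^ 2 * (m : ℝ) := by positivity
  have hnδ : (4 * π ^ 2 * m) ^ δ ≤ X ^ δ := rpow_le_rpow hn hm hδ0
  have hXδ : X ^ δ ≤ X := by simpa using rpow_le_rpow_of_exponent_le hX hδ1
  obtain ⟨hdiff, hsum⟩ := sum_sq_bounds_of_mem_annulus hm (hnδ.trans hXδ) hann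
  have hξ : znorm ξ ≤ √X := sqrt_le_sqrt hsum
  have hinner : |∑ i, (ξ i : ℝ) * ζ i| ≤ X ^ δ :=
    calc |∑ i, (ξ i : ℝ) * ζ i| ≤ znorm ξ ^ (2 * δ) := hbad
      _ ≤ √X ^ (2 * δ) := rpow_le_rpow (sqrt_nonneg _) hξ (by positivity)
      _ = X ^ δ := by rw [sqrt_eq_rpow, ← rpow_mul (by linarith)]; ring_nf
  have hfree : |(freeCoord ζ ξ : ℝ)| ≤ √X := by
    unfold freeCoord
    split_ifs <;> exact (abs_coord_le_znorm ξ _).trans hξ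
  simp only [witnessData, witnessBox, mem_product, Fintype.mem_piFinset]
  refine ⟨fun i => mem_symmIcc_of_abs_le ?_, mem_symmIcc_of_abs_le (by push_cast; exact hinner),
    mem_symmIcc_of_abs_le hfree, mem_symmIcc_of_abs_le ?_⟩
  · exact ((abs_coord_le_znorm ζ i).trans hζ).trans (rpow_le_rpow hn hm hε)
  · push_cast
    rw [abs_sub_comm]
    exact hdiff.trans hnδ

lemma countLE_sdiff_goodSet_le {δ ε X : ℝ} (hδ0 : 0 ≤ δ) (hδ1 : δ ≤ 1) (hε : 0 ≤ ε)
    (hX : 1 ≤ X) :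
    (countLE (Sset \ goodSet δ ε) X : ℝ) ≤ 3125 * X ^ (1 / 2 + 2 * δ + 2 * ε) := by
  classical
  refine le_trans ?_ (card_witnessBox_le hδ0 hε hX)
  rw [countLE_eq_card]
  refine Nat.cast_le.2 (card_le_card_of_forall_subsingleton
    (fun k z => ∃ ζ ξ, ζ ≠ 0 ∧ witnessData ζ ξ (Nat.nth IsSum2Sq k) = z) ?_ ?_)
  · intro k hk
    rw [mem_filter] at hk
    obtain ⟨-, ⟨hS, hG⟩, hkX⟩ := hk
    obtain ⟨ζ, hζ0, hζ, ξ, hann, hbad⟩ : ∃ ζ : Fin 2 → ℤ, ζ ≠ 0 ∧ znorm ζ ≤ nseq k ^ ε ∧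
        ∃ ξ, ξ ∈ annulus (nseq k) (nseq k ^ δ) ∧ ξ ∈ badSet δ ζ := by
      simpa [goodSet, hS, Set.eq_empty_iff_forall_notMem] using hG
    exact ⟨_, witnessData_mem_witnessBox hδ0 hδ1 hε hX hkX hζ hann hbad, ζ, ξ, hζ0, rfl⟩
  · rintro z - k ⟨-, ζ, ξ, hζ, rfl⟩ k' ⟨-, ζ', ξ', -, h⟩
    exact Nat.nth_injective setOf_isSum2Sq_infinite (eq_of_witnessData_eq hζ h.symm)

lemma sq_card_le_card_mul_card_filter_eq {α β : Type*} [DecidableEq β] (f : α → β)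
    {s : Finset α} {t : Finset β} (hf : ∀ a ∈ s, f a ∈ t) :
    #s ^ 2 ≤ #t * #{p ∈ s ×ˢ s | f p.1 = f p.2} := by
  have hpairs : #{p ∈ s ×ˢ s | f p.1 = f p.2} = ∑ b ∈ t, #{a ∈ s | f a = b} ^ 2 := by
    rw [card_eq_sum_card_fiberwise (f := fun p => f p.1) (t := t)
      fun p hp => hf _ (mem_product.1 (mem_filter.1 hp).1).1]
    refine sum_congr rfl fun b _ => ?_
    rw [sq, ← card_product]
    congr 1
    ext p
    simp only [mem_filter, mem_product]
    constructor
    · rintro ⟨⟨⟨h1, h2⟩, h⟩, rfl⟩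
      exact ⟨⟨h1, rfl⟩, h2, h.symm⟩
    · rintro ⟨⟨h1, rfl⟩, h2, h⟩
      exact ⟨⟨⟨h1, h2⟩, h.symm⟩, rfl⟩
  rw [hpairs, card_eq_sum_card_fiberwise hf]
  exact sq_sum_le_card_mul_sum_sq

def divPairs (N : ℕ) : Finset (ℕ × ℕ) := {uv ∈ Icc 1 N ×ˢ Icc 1 N | uv.2 ∣ uv.1}

lemma card_divPairs_le (N : ℕ) : (#(divPairs N) : ℝ) ≤ N * (1 + log N) := by
  have hfib : #(divPairs N) = ∑ v ∈ Icc 1 N, N / v := by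
    rw [divPairs, card_filter, sum_product_right]
    refine sum_congr rfl fun v _ => ?_
    rw [← card_filter, ← Nat.Ioc_filter_dvd_card_eq_div, ← Icc_add_one_left_eq_Ioc, zero_add]
  calc (#(divPairs N) : ℝ) = ∑ v ∈ Icc 1 N, ((N / v : ℕ) : ℝ) := by rw [hfib]; push_cast; rfl
    _ ≤ ∑ v ∈ Icc 1 N, N * (v : ℝ)⁻¹ := sum_le_sum fun v _ => by
        simpa only [div_eq_mul_inv] using Nat.cast_div_le
    _ = N * harmonic N := by rw [← mul_sum, harmonic_eq_sum_Icc]; push_cast; rfl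
    _ ≤ N * (1 + log N) := by gcongr; exact harmonic_le_one_add_log N

def sqPairs (K : ℕ) : Finset ((ℕ × ℕ) × (ℕ × ℕ)) :=
  {pq ∈ (range (K + 1) ×ˢ range (K + 1)) ×ˢ (range (K + 1) ×ˢ range (K + 1)) |
    pq.1.1 ^ 2 + pq.1.2 ^ 2 = pq.2.1 ^ 2 + pq.2.2 ^ 2}

lemma sub_mul_add_eq_of_sq_add_sq_eq {a b c d : ℕ} (hca : c < a)
    (h : a ^ 2 + b ^ 2 = c ^ 2 + d ^ 2) : b < d ∧ (a - c) * (a + c) = (d - b) * (d + b) := by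
  have hbd : b < d := by
    by_contra! hdb
    have := Nat.pow_lt_pow_left hca two_ne_zero
    have := Nat.pow_le_pow_left hdb 2
    omega
  refine ⟨hbd, ?_⟩
  zify [hca.le, hbd.le] at h ⊢
  linear_combination h

lemma eq_of_sq_add_sq_eq_of_sub_eq {a b c d a' b' c' d' : ℕ} (hca : c < a)
    (h : a ^ 2 + b ^ 2 = c ^ 2 + d ^ 2) (hca' : c' < a') (h' : a' ^ 2 + b' ^ 2 = c' ^ 2 + d' ^ 2)
    (hsub : a - c = a' - c') (hadd : a + c = a' + c') (hdb : d - b = d' - b') :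
    a = a' ∧ b = b' ∧ c = c' ∧ d = d' := by
  obtain ⟨hbd, hfac⟩ := sub_mul_add_eq_of_sq_add_sq_eq hca h
  obtain ⟨-, hfac'⟩ := sub_mul_add_eq_of_sq_add_sq_eq hca' h'
  have hsum : d + b = d' + b' :=
    Nat.eq_of_mul_eq_mul_left (Nat.sub_pos_of_lt hbd) (by rw [← hfac, hsub, hadd, hfac', hdb])
  omega

lemma card_sqPairs_filter_lt_le (K : ℕ) :
    #{pq ∈ sqPairs K | pq.2.1 < pq.1.1} ≤ #(divPairs (2 * K)) ^ 2 := by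
  rw [sq, ← card_product]
  refine card_le_card_of_forall_subsingleton (fun pq e => e.1.1 = pq.1.1 - pq.2.1 ∧
    e.2.1 = pq.1.1 + pq.2.1 ∧ pq.2.2 - pq.1.2 = e.1.2 * e.2.2) ?_ ?_
  · rintro ⟨⟨a, b⟩, ⟨c, d⟩⟩ hpq
    simp only [sqPairs, mem_filter, mem_product, mem_range] at hpq
    obtain ⟨⟨⟨⟨ha, -⟩, -, -⟩, h⟩, hca⟩ := hpq
    obtain ⟨-, hfac⟩ := sub_mul_add_eq_of_sq_add_sq_eq hca h
    obtain ⟨v, w, hv, hw, hvw⟩ := exists_dvd_and_dvd_of_dvd_mul (Dvd.intro _ hfac.symm)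
    have hv1 := Nat.pos_of_dvd_of_pos hv (by omega)
    have hv2 := Nat.le_of_dvd (by omega) hv
    have hw1 := Nat.pos_of_dvd_of_pos hw (by omega)
    have hw2 := Nat.le_of_dvd (by omega) hw
    refine ⟨((a - c, v), (a + c, w)), ?_, rfl, rfl, hvw⟩
    simp only [divPairs, mem_product, mem_filter, mem_Icc]
    exact ⟨⟨⟨⟨by omega, by omega⟩, by omega, by omega⟩, hv⟩, ⟨⟨by omega, by omega⟩, by omega,
      by omega⟩, hw⟩
  · rintro e - ⟨⟨a, b⟩, ⟨c, d⟩⟩ ⟨hpq, h1, h2, h3⟩ ⟨⟨a', b'⟩, ⟨c', d'⟩⟩ ⟨hpq', h1', h2', h3'⟩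
    simp only [sqPairs, mem_filter] at hpq hpq'
    obtain ⟨rfl, rfl, rfl, rfl⟩ := eq_of_sq_add_sq_eq_of_sub_eq hpq.2 hpq.1.2 hpq'.2 hpq'.1.2
      (h1.symm.trans h1') (h2.symm.trans h2') (h3.trans h3'.symm)
    rfl

lemma card_sqPairs_le (K : ℕ) : #(sqPairs K) ≤ (K + 1) ^ 2 + 2 * #(divPairs (2 * K)) ^ 2 := by
  set L := {pq ∈ sqPairs K | pq.2.1 < pq.1.1}
  have hsnd : ∀ pq ∈ {pq ∈ sqPairs K | pq.1.1 = pq.2.1}, pq.2 = pq.1 := by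
    rintro ⟨⟨a, b⟩, ⟨c, d⟩⟩ hpq
    simp only [sqPairs, mem_filter] at hpq
    obtain ⟨⟨-, h⟩, rfl⟩ := hpq
    rw [Nat.pow_left_injective two_ne_zero (by omega : d ^ 2 = b ^ 2)]
  have hdiag : #{pq ∈ sqPairs K | pq.1.1 = pq.2.1} ≤ (K + 1) ^ 2 := by
    rw [sq, ← card_range (K + 1), ← card_product]
    refine card_le_card_of_injOn Prod.fst (fun pq hpq => ?_) fun pq hpq pq' hpq' hfst => ?_
    · simp only [sqPairs, mem_coe, mem_filter, mem_product] at hpq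
      exact mem_product.2 hpq.1.1.1
    · exact Prod.ext hfst (by rw [hsnd pq hpq, hsnd pq' hpq', hfst])
  have hoff : {pq ∈ sqPairs K | ¬pq.1.1 = pq.2.1} ⊆ L ∪ L.image Prod.swap := by
    intro pq hpq
    simp only [L, sqPairs, mem_union, mem_image, mem_filter, mem_product] at hpq ⊢
    rcases lt_or_gt_of_ne hpq.2 with hlt | hgt
    · exact Or.inr ⟨pq.swap, ⟨⟨⟨hpq.1.1.2, hpq.1.1.1⟩, hpq.1.2.symm⟩, hlt⟩, rfl⟩
    · exact Or.inl ⟨hpq.1, hgt⟩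
  have hL : #L ≤ #(divPairs (2 * K)) ^ 2 := card_sqPairs_filter_lt_le K
  have hswap : #(L.image Prod.swap) ≤ #L := card_image_le
  calc #(sqPairs K) = #{pq ∈ sqPairs K | pq.1.1 = pq.2.1} + #{pq ∈ sqPairs K | ¬pq.1.1 = pq.2.1} :=
        (card_filter_add_card_filter_not _).symm
    _ ≤ (K + 1) ^ 2 + (#L + #(L.image Prod.swap)) :=
        add_le_add hdiag ((card_le_card hoff).trans (card_union_le _ _))
    _ ≤ (K + 1) ^ 2 + 2 * #(divPairs (2 * K)) ^ 2 := by omega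

lemma sq_le_nine_mul_card_isSum2Sq [DecidablePred IsSum2Sq] (K : ℕ) :
    ((K : ℝ) + 1) ^ 2 ≤
      9 * #{m ∈ range (2 * K ^ 2 + 1) | IsSum2Sq m} * (1 + log (2 * K : ℕ)) ^ 2 := by
  set V := {m ∈ range (2 * K ^ 2 + 1) | IsSum2Sq m}
  set ℓ := 1 + log (2 * K : ℕ)
  have hℓ : 1 ≤ ℓ := le_add_of_nonneg_right (log_natCast_nonneg _)
  have hsum : ∀ p ∈ range (K + 1) ×ˢ range (K + 1), p.1 ^ 2 + p.2 ^ 2 ∈ V := by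
    intro p hp
    simp only [mem_product, mem_range, Nat.lt_succ_iff] at hp
    refine mem_filter.2 ⟨mem_range.2 (Nat.lt_succ_of_le ?_), p.1, p.2, by push_cast; rfl⟩
    nlinarith [Nat.pow_le_pow_left hp.1 2, Nat.pow_le_pow_left hp.2 2]
  have hcs : (((K : ℝ) + 1) ^ 2) ^ 2 ≤ #V * #(sqPairs K) := by
    have := sq_card_le_card_mul_card_filter_eq (fun p : ℕ × ℕ => p.1 ^ 2 + p.2 ^ 2) hsum
    rw [card_product, card_range, ← sq] at this
    exact_mod_cast this
  have hE : (#(divPairs (2 * K)) : ℝ) ≤ 2 * ((K : ℝ) + 1) * ℓ :=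
    calc (#(divPairs (2 * K)) : ℝ) ≤ (2 * K : ℕ) * ℓ := card_divPairs_le (2 * K)
      _ ≤ 2 * ((K : ℝ) + 1) * ℓ := by gcongr; push_cast; linarith
  have hpairs : (#(sqPairs K) : ℝ) ≤ 9 * ((K : ℝ) + 1) ^ 2 * ℓ ^ 2 :=
    calc (#(sqPairs K) : ℝ) ≤ (K + 1) ^ 2 + 2 * #(divPairs (2 * K)) ^ 2 := by
          exact_mod_cast card_sqPairs_le K
      _ ≤ (K + 1) ^ 2 * ℓ ^ 2 + 2 * (2 * ((K : ℝ) + 1) * ℓ) ^ 2 := by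
          gcongr
          exact le_mul_of_one_le_right (by positivity) (one_le_pow₀ hℓ)
      _ = 9 * ((K : ℝ) + 1) ^ 2 * ℓ ^ 2 := by ring
  refine le_of_mul_le_mul_left ?_ (by positivity : (0 : ℝ) < ((K : ℝ) + 1) ^ 2)
  calc ((K : ℝ) + 1) ^ 2 * ((K : ℝ) + 1) ^ 2 = (((K : ℝ) + 1) ^ 2) ^ 2 := by ring
    _ ≤ (#V : ℝ) * #(sqPairs K) := hcs
    _ ≤ (#V : ℝ) * (9 * ((K : ℝ) + 1) ^ 2 * ℓ ^ 2) := by gcongr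
    _ = ((K : ℝ) + 1) ^ 2 * (9 * #V * ℓ ^ 2) := by ring

lemma card_isSum2Sq_le_countLE [DecidablePred IsSum2Sq] {N : ℕ} {X : ℝ}
    (hN : 4 * π ^ 2 * N ≤ X) : #{m ∈ range (N + 1) | IsSum2Sq m} ≤ countLE Sset X := by
  classical
  rw [countLE_eq_card]
  refine card_le_card_of_injOn (Nat.count IsSum2Sq) (fun m hm => ?_) fun m hm m' hm' h =>
    Nat.count_injective (mem_filter.1 hm).2 (mem_filter.1 hm').2 h
  obtain ⟨hmN, hm⟩ := mem_filter.1 hm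
  have hnseq : nseq (Nat.count IsSum2Sq m) = 4 * π ^ 2 * m := by rw [nseq, Nat.nth_count hm]
  have hmX : nseq (Nat.count IsSum2Sq m) ≤ X := by
    rw [hnseq]
    exact le_trans (by gcongr; exact_mod_cast Nat.lt_succ_iff.1 (mem_range.1 hmN)) hN
  exact mem_filter.2 ⟨mem_range.2 (Nat.lt_succ_of_le (Nat.le_floor ((le_nseq _).trans hmX))),
    ⟨_, rfl⟩, hmX⟩

lemma le_countLE_Sset {X : ℝ} (hX : 80 ≤ X) : X ≤ 2880 * countLE Sset X * log X ^ 2 := by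
  classical
  set K := ⌊√(X / 80)⌋₊
  have hX80 : 0 ≤ X / 80 := by positivity
  have hK1 : 1 ≤ K := Nat.le_floor (by simpa using sqrt_le_sqrt (by linarith : 1 ≤ X / 80))
  have hKsq : (K : ℝ) ^ 2 ≤ X / 80 := by
    have := pow_le_pow_left₀ (Nat.cast_nonneg K) (Nat.floor_le (sqrt_nonneg (X / 80))) 2
    rwa [sq_sqrt hX80] at this
  have hKup : X / 80 ≤ ((K : ℝ) + 1) ^ 2 := by
    have := pow_le_pow_left₀ (sqrt_nonneg _) (Nat.lt_floor_add_one (√(X / 80))).le 2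
    rwa [sq_sqrt hX80] at this
  have hcount := card_isSum2Sq_le_countLE (N := 2 * K ^ 2) (X := X) (by
    have hpi : π ^ 2 ≤ 10 := by nlinarith [pi_lt_d2, pi_pos]
    push_cast
    nlinarith [mul_le_mul_of_nonneg_right hpi (sq_nonneg (K : ℝ))])
  have hlog : 1 + log (2 * K : ℕ) ≤ 2 * log X := by
    have h1 : 1 ≤ log X := by
      rw [le_log_iff_exp_le (by linarith)]
      linarith [exp_one_lt_d9]
    have h2 : log (2 * K : ℕ) ≤ log X := by
      apply log_le_log (by positivity)
      push_cast
      nlinarith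
    linarith
  calc X = 80 * (X / 80) := by ring
    _ ≤ 80 * (9 * #{m ∈ range (2 * K ^ 2 + 1) | IsSum2Sq m} * (1 + log (2 * K : ℕ)) ^ 2) := by
        gcongr
        exact hKup.trans (sq_le_nine_mul_card_isSum2Sq K)
    _ ≤ 80 * (9 * countLE Sset X * (2 * log X) ^ 2) := by gcongr
    _ = 2880 * countLE Sset X * log X ^ 2 := by ring

lemma countLE_Sset_pos {X : ℝ} (hX : 0 ≤ X) : 0 < countLE Sset X := by
  classical
  have hzero : nseq 0 = 0 := by
    rw [nseq, Nat.nth_zero_of_zero ⟨0, 0, by norm_num⟩, Nat.cast_zero, mul_zero]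
  rw [countLE_eq_card]
  exact card_pos.2 ⟨0, mem_filter.2 ⟨mem_range.2 (Nat.succ_pos _), ⟨0, rfl⟩, hzero ▸ hX⟩⟩

lemma tendsto_countLE_sdiff_div_countLE {G : Set ℝ} {C a : ℝ} (ha : a < 1)
    (hbad : ∀ X, 1 ≤ X → (countLE (Sset \ G) X : ℝ) ≤ C * X ^ a) :
    Tendsto (fun X => (countLE (Sset \ G) X : ℝ) / countLE Sset X) atTop (nhds 0) := by
  have hlog : Tendsto (fun X => log X ^ 2 / X ^ (1 - a)) atTop (nhds 0) := by
    simpa only [rpow_two] using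
      (isLittleO_log_rpow_rpow_atTop 2 (sub_pos.2 ha)).tendsto_div_nhds_zero
  refine squeeze_zero' (Eventually.of_forall fun X => by positivity) ?_
    (by simpa using hlog.const_mul (2880 * C))
  filter_upwards [eventually_ge_atTop 80] with X hX
  have hX0 : 0 < X := by linarith
  have hpos : 0 < (countLE Sset X : ℝ) := by exact_mod_cast countLE_Sset_pos hX0.le
  have hbadX := hbad X (by linarith)
  have hCX : 0 ≤ C * X ^ a := (Nat.cast_nonneg _).trans hbadX
  rw [div_le_iff₀ hpos]
  calc (countLE (Sset \ G) X : ℝ) ≤ C * X ^ a * X / X := by rwa [mul_div_cancel_right₀ _ hX0.ne']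
    _ ≤ C * X ^ a * (2880 * countLE Sset X * log X ^ 2) / X := by
        gcongr
        exact le_countLE_Sset hX
    _ = 2880 * C * (log X ^ 2 / X ^ (1 - a)) * countLE Sset X := by
        rw [rpow_sub hX0, rpow_one]
        field_simp

lemma hasDensityOne_of_countLE_sdiff_le {G : Set ℝ} (hG : G ⊆ Sset) {C a : ℝ} (ha : a < 1)
    (hbad : ∀ X, 1 ≤ X → (countLE (Sset \ G) X : ℝ) ≤ C * X ^ a) : HasDensityOne G := by
  have hsplit : ∀ᶠ X in atTop, 1 - (countLE (Sset \ G) X : ℝ) / countLE Sset X =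
      (countLE G X : ℝ) / countLE Sset X := by
    filter_upwards [eventually_ge_atTop 0] with X hX
    have hpos : (countLE Sset X : ℝ) ≠ 0 := by exact_mod_cast (countLE_Sset_pos hX).ne'
    rw [← countLE_add_countLE_sdiff hG X, Nat.cast_add] at hpos ⊢
    field_simp
    ring
  simpa [HasDensityOne] using
    (tendsto_const_nhds.sub (tendsto_countLE_sdiff_div_countLE ha hbad)).congr' hsplit

/-- The counting bound for the complement of `S'` in `S`, and the density-one
property of `S'`. -/
theorem good_set_density_one (δ : ℝ) (hδ : δ ∈ Set.Ioo (θH / 2) (1/2 - θH)) :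
    (∃ C : ℝ, 0 < C ∧ ∀ X : ℝ, 2 ≤ X →
      (countLE (Sset \ goodSet δ ((1/2 - θH - δ) / 2)) X : ℝ)
        ≤ C * X ^ (1/2 + δ + θH + (1/2 - θH - δ) / 2)) ∧
    1/2 + δ + θH + (1/2 - θH - δ) / 2 < 1 ∧
    HasDensityOne (goodSet δ ((1/2 - θH - δ) / 2)) := by
  obtain ⟨hδl, hδu⟩ := hδ
  have hθ : θH = 133 / 416 := rfl
  have hbad := fun X (hX : 1 ≤ X) => countLE_sdiff_goodSet_le (δ := δ)
    (ε := (1/2 - θH - δ) / 2) (by linarith) (by linarith) (by linarith) hX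
  refine ⟨⟨3125, by norm_num, fun X hX => (hbad X (by linarith)).trans ?_⟩, by linarith,
    hasDensityOne_of_countLE_sdiff_le (fun n hn => hn.1) (by linarith) hbad⟩
  exact mul_le_mul_of_nonneg_left (rpow_le_rpow_of_exponent_le (by linarith) (by linarith))
    (by norm_num)
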